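/- arXiv:0706.2384 — 6 statements merged into one kernel-verified Lean document; each statement's English description precedes it below -/
import Mathlib

section
/- Define F(a,b,c,d) = a²d² - 4abcd + ac³ + b³d + b²c². If a sequence satisfies a_{n} a_{n-4} = a_{n-1} a_{n-3} + a_{n-2}² for all n ≥ 4 with all terms nonzero, then a_{n-2} · F(a_{n-1}, a_n, a_{n+1}, a_{n+2}) = a_{n+2} · F(a_{n-2}, a_{n-1}, a_n, a_{n+1}) for all applicable n. -/
def somosF (a b c d : ℚ) : ℚ := a^2*d^2 - 4*a*b*c*d + a*c^3 + b^3*d + b^2*c^2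

theorem mul_somosF_sub_mul_somosF (a b c d e : ℚ) :
    a * somosF b c d e - e * somosF a b c d =
      (b ^ 2 * e - a * d ^ 2) * (e * a - d * b - c ^ 2) := by
  unfold somosF
  ring

theorem mul_somosF_eq_mul_somosF {a b c d e : ℚ} (h : e * a = d * b + c ^ 2) :
    a * somosF b c d e = e * somosF a b c d := by
  rw [← sub_eq_zero, mul_somosF_sub_mul_somosF, h]
  ring

theorem somos_F_scaling_general (a : ℕ → ℚ)
    (hrec : ∀ n, a (n + 4) * a n = a (n + 3) * a (n + 1) + a (n + 2) ^ 2) :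
    ∀ n, a n * somosF (a (n + 1)) (a (n + 2)) (a (n + 3)) (a (n + 4))
      = a (n + 4) * somosF (a n) (a (n + 1)) (a (n + 2)) (a (n + 3)) :=
  fun n => mul_somosF_eq_mul_somosF (hrec n)

/-- If a sequence of nonzero rationals satisfies the Somos-4 recurrence
`a n * a (n-4) = a (n-1) * a (n-3) + a (n-2)^2`, then
`a (n-2) * F(a (n-1), a n, a (n+1), a (n+2)) = a (n+2) * F(a (n-2), a (n-1), a n, a (n+1))`. -/
theorem somos_F_scaling (a : ℕ → ℚ) (hne : ∀ n, a n ≠ 0)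
    (hrec : ∀ n, a (n + 4) * a n = a (n + 3) * a (n + 1) + a (n + 2) ^ 2) :
    ∀ n, a n * somosF (a (n + 1)) (a (n + 2)) (a (n + 3)) (a (n + 4))
      = a (n + 4) * somosF (a n) (a (n + 1)) (a (n + 2)) (a (n + 3)) :=
  somos_F_scaling_general a hrec
end

section
/- If a sequence of nonzero rationals satisfies a_n a_{n-4} = a_{n-1}a_{n-3} + a_{n-2}² for n ≥ 4, with a_0 = a_1 = a_2 = a_3 = 1, then F(a_{n-1}, a_n, a_{n+1}, a_{n+2}) = 0 for all n ≥ 1, where F(a,b,c,d) = a²d² - 4abcd + ac³ + b³d + b²c². -/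
theorem sq_mul_somosF_shift (a b c d e : ℚ) (h : e * a = d * b + c ^ 2) :
    a ^ 2 * somosF b c d e = e * a * somosF a b c d := by
  unfold somosF
  linear_combination (a * b ^ 2 * e - a ^ 2 * d ^ 2) * h

theorem somosF_shift_eq_zero {a b c d e : ℚ} (ha : a ≠ 0) (h : e * a = d * b + c ^ 2)
    (hF : somosF a b c d = 0) : somosF b c d e = 0 := by
  simpa [hF, ha] using sq_mul_somosF_shift a b c d e h

/-- For the Somos-4 sequence (with initial values `1,1,1,1`, all terms nonzero),
`F(a (n-1), a n, a (n+1), a (n+2)) = 0` for all `n ≥ 1`. -/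
theorem somos_F_vanishes (a : ℕ → ℚ) (hne : ∀ n, a n ≠ 0)
    (h0 : a 0 = 1) (h1 : a 1 = 1) (h2 : a 2 = 1) (h3 : a 3 = 1)
    (hrec : ∀ n, a (n + 4) * a n = a (n + 3) * a (n + 1) + a (n + 2) ^ 2) :
    ∀ n, somosF (a n) (a (n + 1)) (a (n + 2)) (a (n + 3)) = 0 := by
  intro n
  induction n with
  | zero => norm_num [somosF, h0, h1, h2, h3]
  | succ k ih => exact somosF_shift_eq_zero (hne k) (hrec k) ih
end

section
/- The number of matrices M in GL₂(𝔽_ℓ) such that M - I is invertible (equivalently, 1 is not an eigenvalue of M) equals ℓ⁴ - 2ℓ³ - ℓ² + 3ℓ. -/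
open Finset

section Aux

variable {F : Type*} [Field F] [Fintype F] [DecidableEq F]

private lemma sum_ind_mul_eq (m : F) :
    (∑ p : F × F, if p.1 * p.2 = m then (1:ℤ) else 0)
      = if m = 0 then 2 * (Fintype.card F : ℤ) - 1 else (Fintype.card F : ℤ) - 1 := by
  rw [Fintype.sum_prod_type]
  have inner : ∀ b : F, (∑ c : F, if b * c = m then (1:ℤ) else 0)
      = if b = 0 then (if m = 0 then (Fintype.card F : ℤ) else 0) else 1 := by
    intro b
    by_cases hb : b = 0
    · subst hb
      by_cases hm : m = 0
      · simp [hm, Finset.card_univ]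
      · simp [hm, eq_comm]
    · have key : ∀ c : F, (b * c = m) ↔ (c = b⁻¹ * m) := fun c => by
        rw [eq_inv_mul_iff_mul_eq₀ hb]
      simp only [key]
      rw [Finset.sum_ite_eq' Finset.univ]
      simp [hb]
  simp only [inner]
  have : (∑ b : F, if b = 0 then (if m = 0 then (Fintype.card F : ℤ) else 0) else 1)
      = ∑ b : F, ((if b = 0 then (if m = 0 then (Fintype.card F : ℤ) else 0) - 1 else 0) + 1) := by
    apply Finset.sum_congr rfl
    intro b _
    split <;> ring
  rw [this, Finset.sum_add_distrib, Finset.sum_ite_eq' Finset.univ]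
  by_cases hm : m = 0 <;> simp [hm, Finset.card_univ] <;> ring

omit [Fintype F] in
private lemma pointwise (a d b c : F) :
    (if (b * c ≠ a * d ∧ b * c ≠ (a - 1) * (d - 1)) then (1:ℤ) else 0)
      = 1 - (if b * c = a * d then 1 else 0) - (if b * c = (a - 1) * (d - 1) then 1 else 0)
        + (if a + d = 1 then (if b * c = a * d then (1:ℤ) else 0) else 0) := by
  by_cases h1 : b * c = a * d <;> by_cases h2 : b * c = (a - 1) * (d - 1)
  · have h : a * d = (a - 1) * (d - 1) := h1 ▸ h2
    have h3 : a + d = 1 := by linear_combination h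
    simp [h1, h, h3]
  · have h2' : ¬(a * d = (a - 1) * (d - 1)) := fun hh => h2 (h1.trans hh)
    have h3 : ¬(a + d = 1) := fun h => h2' (by linear_combination h)
    simp [h1, h2', h3]
  · have h1' : ¬((a - 1) * (d - 1) = a * d) := fun hh => h1 (h2.trans hh)
    have h3 : ¬(a + d = 1) := fun h => h1' (by linear_combination -h)
    simp [h2, h1', h3]
  · by_cases h3 : a + d = 1 <;> simp [h1, h2, h3]

end Aux

private abbrev glPred (ℓ : ℕ) : (ZMod ℓ × ZMod ℓ) × (ZMod ℓ × ZMod ℓ) → Prop := fun x =>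
  x.2.1 * x.2.2 ≠ x.1.1 * x.1.2 ∧ x.2.1 * x.2.2 ≠ (x.1.1 - 1) * (x.1.2 - 1)

private def matrixEquiv (ℓ : ℕ) :
    Matrix (Fin 2) (Fin 2) (ZMod ℓ) ≃ (ZMod ℓ × ZMod ℓ) × (ZMod ℓ × ZMod ℓ) where
  toFun A := ((A 0 0, A 1 1), (A 0 1, A 1 0))
  invFun x := !![x.1.1, x.2.1; x.2.2, x.1.2]
  left_inv A := by
    ext i j
    fin_cases i <;> fin_cases j <;> simp
  right_inv x := by simp

private lemma bridge (ℓ : ℕ) (hℓ : ℓ.Prime) :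
    Nat.card {M : GL (Fin 2) (ZMod ℓ) //
        IsUnit ((M : Matrix (Fin 2) (Fin 2) (ZMod ℓ)) - 1)}
      = Nat.card {x : (ZMod ℓ × ZMod ℓ) × (ZMod ℓ × ZMod ℓ) // glPred ℓ x} := by
  haveI : Fact ℓ.Prime := ⟨hℓ⟩
  apply Nat.card_congr
  have e1 : {M : GL (Fin 2) (ZMod ℓ) //
        IsUnit ((M : Matrix (Fin 2) (Fin 2) (ZMod ℓ)) - 1)}
      ≃ {A : Matrix (Fin 2) (Fin 2) (ZMod ℓ) // IsUnit A ∧ IsUnit (A - 1)} :=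
    { toFun := fun M => ⟨(M.1 : Matrix (Fin 2) (Fin 2) (ZMod ℓ)), M.1.isUnit, M.2⟩
      invFun := fun A => ⟨A.2.1.unit, by rw [IsUnit.unit_spec]; exact A.2.2⟩
      left_inv := fun M => by
        apply Subtype.ext
        apply Units.ext
        simp
      right_inv := fun A => by
        apply Subtype.ext
        simp }
  refine e1.trans (Equiv.subtypeEquiv (matrixEquiv ℓ) ?_)
  intro A
  have hd1 : A.det = A 0 0 * A 1 1 - A 0 1 * A 1 0 := Matrix.det_fin_two A
  have hd2 : (A - 1).det = (A 0 0 - 1) * (A 1 1 - 1) - A 0 1 * A 1 0 := by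
    rw [Matrix.det_fin_two]
    simp [Matrix.sub_apply, Matrix.one_apply]
  rw [Matrix.isUnit_iff_isUnit_det, Matrix.isUnit_iff_isUnit_det,
    isUnit_iff_ne_zero, isUnit_iff_ne_zero, hd1, hd2, sub_ne_zero, sub_ne_zero]
  show _ ↔ glPred ℓ ((A 0 0, A 1 1), (A 0 1, A 1 0))
  unfold glPred
  constructor <;> rintro ⟨u, v⟩ <;> exact ⟨Ne.symm u, Ne.symm v⟩

/-- The number of `M ∈ GL₂(𝔽_ℓ)` such that `M - I` is invertible equals
`ℓ⁴ - 2ℓ³ - ℓ² + 3ℓ`. -/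
theorem card_GL2_no_eigenvalue_one (ℓ : ℕ) (hℓ : ℓ.Prime) :
    (Nat.card {M : GL (Fin 2) (ZMod ℓ) //
        IsUnit ((M : Matrix (Fin 2) (Fin 2) (ZMod ℓ)) - 1)} : ℤ)
      = ℓ ^ 4 - 2 * ℓ ^ 3 - ℓ ^ 2 + 3 * ℓ := by
  haveI : Fact ℓ.Prime := ⟨hℓ⟩
  set F := ZMod ℓ with hF
  have hq : (Fintype.card F : ℤ) = (ℓ : ℤ) := by
    simp [hF, ZMod.card]
  set q : ℤ := (ℓ : ℤ) with hqdef
  rw [bridge ℓ hℓ]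
  have hcard : (Nat.card {x : (F × F) × (F × F) // glPred ℓ x} : ℤ)
      = ∑ x : (F × F) × (F × F), if glPred ℓ x then (1:ℤ) else 0 := by
    rw [Nat.card_eq_fintype_card, Fintype.card_subtype, Finset.card_filter]
    push_cast
    rfl
  rw [hcard]
  have hsplit : (∑ x : (F × F) × (F × F), if glPred ℓ x then (1:ℤ) else 0)
      = (∑ _x : (F × F) × (F × F), (1:ℤ))
        - (∑ x : (F × F) × (F × F), if x.2.1 * x.2.2 = x.1.1 * x.1.2 then (1:ℤ) else 0)
        - (∑ x : (F × F) × (F × F),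
            if x.2.1 * x.2.2 = (x.1.1 - 1) * (x.1.2 - 1) then (1:ℤ) else 0)
        + (∑ x : (F × F) × (F × F),
            if x.1.1 + x.1.2 = 1 then (if x.2.1 * x.2.2 = x.1.1 * x.1.2 then (1:ℤ) else 0)
            else 0) := by
    rw [← Finset.sum_sub_distrib, ← Finset.sum_sub_distrib, ← Finset.sum_add_distrib]
    apply Finset.sum_congr rfl
    intro x _
    exact pointwise x.1.1 x.1.2 x.2.1 x.2.2
  rw [hsplit]
  have t1 : (∑ _x : (F × F) × (F × F), (1:ℤ)) = q^4 := by
    simp only [Finset.sum_const, Finset.card_univ, Fintype.card_prod, nsmul_eq_mul, mul_one]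
    push_cast [hq]
    ring
  have gsum : (∑ y : F × F, if y.1 * y.2 = 0 then 2*q - 1 else q - 1)
      = q^2*(q-1) + q*(2*q-1) := by
    have step : (∑ y : F × F, if y.1 * y.2 = 0 then 2*q - 1 else q - 1)
        = ∑ y : F × F, ((q - 1) + q * (if y.1 * y.2 = 0 then (1:ℤ) else 0)) := by
      apply Finset.sum_congr rfl
      intro y _
      split <;> ring
    rw [step, Finset.sum_add_distrib, ← Finset.mul_sum, sum_ind_mul_eq (0 : F)]
    simp only [Finset.sum_const, Finset.card_univ, Fintype.card_prod, nsmul_eq_mul, if_pos rfl]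
    push_cast [hq]
    ring
  have t2 : (∑ x : (F × F) × (F × F), if x.2.1 * x.2.2 = x.1.1 * x.1.2 then (1:ℤ) else 0)
      = q^2*(q-1) + q*(2*q-1) := by
    rw [Fintype.sum_prod_type]
    calc (∑ y : F × F, ∑ z : F × F, if z.1 * z.2 = y.1 * y.2 then (1:ℤ) else 0)
        = ∑ y : F × F, (if y.1 * y.2 = 0 then 2*q - 1 else q - 1) := by
          apply Finset.sum_congr rfl
          intro y _
          rw [sum_ind_mul_eq (y.1 * y.2), hq]
      _ = q^2*(q-1) + q*(2*q-1) := gsum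
  have t3 : (∑ x : (F × F) × (F × F),
        if x.2.1 * x.2.2 = (x.1.1 - 1) * (x.1.2 - 1) then (1:ℤ) else 0)
      = q^2*(q-1) + q*(2*q-1) := by
    rw [Fintype.sum_prod_type]
    calc (∑ y : F × F, ∑ z : F × F, if z.1 * z.2 = (y.1 - 1) * (y.2 - 1) then (1:ℤ) else 0)
        = ∑ y : F × F, (if (y.1 - 1) * (y.2 - 1) = 0 then 2*q - 1 else q - 1) := by
          apply Finset.sum_congr rfl
          intro y _
          rw [sum_ind_mul_eq ((y.1 - 1) * (y.2 - 1)), hq]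
      _ = ∑ y : F × F, (if y.1 * y.2 = 0 then 2*q - 1 else q - 1) := by
          apply Fintype.sum_equiv ((Equiv.subRight (1:F)).prodCongr (Equiv.subRight (1:F)))
          intro y
          simp
      _ = q^2*(q-1) + q*(2*q-1) := gsum
  have t4 : (∑ x : (F × F) × (F × F),
        if x.1.1 + x.1.2 = 1 then (if x.2.1 * x.2.2 = x.1.1 * x.1.2 then (1:ℤ) else 0) else 0)
      = q*(q-1) + 2*q := by
    rw [Fintype.sum_prod_type]
    have step1 : (∑ y : F × F, ∑ z : F × F,
        if y.1 + y.2 = 1 then (if z.1 * z.2 = y.1 * y.2 then (1:ℤ) else 0) else 0)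
        = ∑ y : F × F, (if y.1 + y.2 = 1 then (if y.1 * y.2 = 0 then 2*q - 1 else q - 1) else 0) := by
      apply Finset.sum_congr rfl
      intro y _
      by_cases h : y.1 + y.2 = 1
      · simp only [h, if_true]
        rw [sum_ind_mul_eq (y.1 * y.2), hq]
      · simp [h]
    rw [step1, Fintype.sum_prod_type]
    have step2 : (∑ a : F, ∑ d : F,
        if a + d = 1 then (if a * d = 0 then 2*q - 1 else q - 1) else 0)
        = ∑ a : F, (if a * (1 - a) = 0 then 2*q - 1 else q - 1) := by
      apply Finset.sum_congr rfl
      intro a _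
      have key : ∀ d : F, (a + d = 1) ↔ (d = 1 - a) := by
        intro d; constructor <;> intro h <;> linear_combination h
      simp only [key]
      rw [Finset.sum_ite_eq' Finset.univ]
      simp
    rw [step2]
    have step3 : (∑ a : F, if a * (1 - a) = 0 then 2*q - 1 else q - 1)
        = ∑ a : F, ((q - 1) + q * (if a = 0 then (1:ℤ) else 0) + q * (if a = 1 then (1:ℤ) else 0)) := by
      apply Finset.sum_congr rfl
      intro a _
      have hiff : a * (1 - a) = 0 ↔ (a = 0 ∨ a = 1) := by
        rw [mul_eq_zero, sub_eq_zero]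
        constructor
        · rintro (h | h)
          · exact Or.inl h
          · exact Or.inr h.symm
        · rintro (h | h)
          · exact Or.inl h
          · exact Or.inr h.symm
      by_cases h0 : a = 0
      · have h1 : a ≠ 1 := by rw [h0]; exact zero_ne_one
        rw [if_pos (hiff.mpr (Or.inl h0)), if_pos h0, if_neg h1]
        ring
      · by_cases h1 : a = 1
        · rw [if_pos (hiff.mpr (Or.inr h1)), if_neg h0, if_pos h1]
          ring
        · have hor : ¬(a = 0 ∨ a = 1) := by tauto
          rw [if_neg (fun h => hor (hiff.mp h)), if_neg h0, if_neg h1]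
          ring
    rw [step3, Finset.sum_add_distrib, Finset.sum_add_distrib,
      ← Finset.mul_sum, ← Finset.mul_sum]
    have c1 : (∑ a : F, if a = 0 then (1:ℤ) else 0) = 1 := by
      rw [Finset.sum_ite_eq' Finset.univ]; simp
    have c2 : (∑ a : F, if a = 1 then (1:ℤ) else 0) = 1 := by
      rw [Finset.sum_ite_eq' Finset.univ]; simp
    rw [c1, c2]
    simp only [Finset.sum_const, Finset.card_univ, nsmul_eq_mul, mul_one]
    push_cast [hq]
    ring
  rw [t1, t2, t3, t4]
  ring
end

section
/- Let ℓ be a prime, n ≥ 2, and a, b ∈ ℤ/ℓℤ, c ∈ ℤ/ℓⁿℤ. The number of pairs (α, β) ∈ (ℤ/ℓⁿℤ)² with αβ = c, α ≡ a (mod ℓ), β ≡ b (mod ℓ) equals: 0 if ab ≢ c (mod ℓ); ℓ^{n-1} if ab ≡ c (mod ℓ) and a or b is nonzero; (ℓ-1)(ord_ℓ(c) - 1)·ℓ^{n-1} if a ≡ b ≡ c ≡ 0 (mod ℓ) and c ≢ 0 (mod ℓⁿ); (nℓ - n - ℓ + 2)·ℓ^{n-1} if a ≡ b ≡ 0 (mod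 ℓ) and c ≡ 0 (mod ℓⁿ). -/
/-!
Reduction mod `ℓ` detects the units of `ZMod (ℓ ^ n)`. If `a ≠ 0`, then `α` runs over the
`ℓ ^ (n - 1)` lifts of `a`, each of them a unit, and `β = α⁻¹ c` is forced. If `a = b = 0`, both
factors are nonunits. A nonzero nonunit `α` is `ℓ ^ i * u` with `u` a unit and `1 ≤ i < n`; the
nonunit solutions `β` of `α * β = c` number `ℓ ^ i` if `ℓ ^ (i + 1) ∣ c` and none otherwise, and
there are `(ℓ - 1) * ℓ ^ (n - 1 - i)` such `α`. So every admissible `i` contributes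
`(ℓ - 1) * ℓ ^ (n - 1)`, and `α = 0` contributes the `ℓ ^ (n - 1)` nonunits `β` when `c = 0`.
-/

open Finset

lemma Finset.card_filter_prod_eq_sum {α β : Type*} [Fintype α] [Fintype β]
    (P : α → Prop) (Q : α → β → Prop) [DecidablePred P] [∀ a, DecidablePred (Q a)] :
    #{p : α × β | P p.1 ∧ Q p.1 p.2} = ∑ a with P a, #{b | Q a b} := by
  simp only [card_filter, Fintype.sum_prod_type, sum_filter, ite_and, sum_ite_irrel, sum_const_zero]

namespace ZMod

section Quotient

variable {q : ℕ} [NeZero q]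

lemma card_castHom_fiber {m : ℕ} (hm : m ∣ q) (y : ZMod m) :
    #{x : ZMod q | castHom hm (ZMod m) x = y} = q / m := by
  have : NeZero m := .of_pos (Nat.pos_of_dvd_of_pos hm (NeZero.pos q))
  set f := castHom hm (ZMod m)
  have hq : q = m * #{x | f x = y} := calc
    q = #(univ : Finset (ZMod q)) := (ZMod.card q).symm
    _ = ∑ z : ZMod m, #{x | f x = z} := card_eq_sum_card_fiberwise fun _ _ => mem_univ _
    _ = m * #{x | f x = y} := by
      rw [sum_congr rfl fun z _ => AddMonoidHom.card_fiber_eq_of_mem_range f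
        (castHom_surjective hm z) (castHom_surjective hm y), sum_const, card_univ, ZMod.card,
        smul_eq_mul]
  exact (Nat.div_eq_of_eq_mul_left (NeZero.pos m) (hq.trans (mul_comm _ _))).symm

lemma castHom_eq_zero_iff_dvd_val {k : ℕ} (hk : k ∣ q) (x : ZMod q) :
    castHom hk (ZMod k) x = 0 ↔ k ∣ x.val := by
  rw [castHom_apply, ← natCast_val, natCast_eq_zero_iff]

lemma card_dvd_val {k : ℕ} (hk : k ∣ q) : #{x : ZMod q | k ∣ x.val} = q / k := by
  simp_rw [← castHom_eq_zero_iff_dvd_val hk, card_castHom_fiber]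

lemma natCast_mul_eq_natCast_mul_iff {d k : ℕ} (hd : d ≠ 0) (hq : d * k = q) (x y : ZMod q) :
    (d : ZMod q) * x = d * y ↔
      castHom (Dvd.intro_left d hq) (ZMod k) x = castHom (Dvd.intro_left d hq) (ZMod k) y := by
  subst hq
  rw [castHom_apply, castHom_apply, ← natCast_val, ← natCast_val (i := y), natCast_eq_natCast_iff,
    ← Nat.ModEq.mul_left_cancel_iff' hd, ← natCast_eq_natCast_iff, Nat.cast_mul, Nat.cast_mul,
    natCast_zmod_val, natCast_zmod_val]

end Quotient

section PrimePower

variable {ℓ n : ℕ} [Fact ℓ.Prime]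

lemma card_pow_dvd_val {k : ℕ} (hk : k ≤ n) :
    #{x : ZMod (ℓ ^ n) | ℓ ^ k ∣ x.val} = ℓ ^ (n - k) := by
  rw [card_dvd_val (pow_dvd_pow ℓ hk), Nat.pow_div hk (Fact.out : ℓ.Prime).pos]

lemma isUnit_iff_not_dvd_val (hn : n ≠ 0) (x : ZMod (ℓ ^ n)) : IsUnit x ↔ ¬ ℓ ∣ x.val := by
  rw [← isUnit_natCast_iff_not_dvd_pow Fact.out (Nat.pos_of_ne_zero hn), natCast_zmod_val]

lemma isUnit_iff_castHom_ne_zero (hn : n ≠ 0) (x : ZMod (ℓ ^ n)) :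
    IsUnit x ↔ castHom (dvd_pow_self ℓ hn) (ZMod ℓ) x ≠ 0 := by
  rw [isUnit_iff_not_dvd_val hn, Ne, castHom_eq_zero_iff_dvd_val]

lemma card_nonunits (hn : n ≠ 0) : #{x : ZMod (ℓ ^ n) | ¬IsUnit x} = ℓ ^ (n - 1) := by
  simp_rw [isUnit_iff_not_dvd_val hn, not_not, ← card_pow_dvd_val (Nat.one_le_iff_ne_zero.2 hn),
    pow_one]

lemma padicValNat_val_lt {x : ZMod (ℓ ^ n)} (hx : x ≠ 0) : padicValNat ℓ x.val < n :=
  (Nat.pow_lt_pow_iff_right (Fact.out : ℓ.Prime).one_lt).mp <|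
    (Nat.le_of_dvd (Nat.pos_of_ne_zero ((val_ne_zero x).2 hx)) pow_padicValNat_dvd).trans_lt
      (val_lt x)

lemma not_isUnit_iff_one_le_padicValNat {x : ZMod (ℓ ^ n)} (hx : x ≠ 0) :
    ¬IsUnit x ↔ 1 ≤ padicValNat ℓ x.val := by
  have hn : n ≠ 0 := (padicValNat_val_lt hx).ne_bot
  rw [isUnit_iff_not_dvd_val hn, not_not, ← padicValNat_dvd_iff_le ((val_ne_zero x).2 hx), pow_one]

lemma exists_eq_pow_padicValNat_mul_unit {x : ZMod (ℓ ^ n)} (hx : x ≠ 0) :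
    ∃ u : (ZMod (ℓ ^ n))ˣ, x = ℓ ^ padicValNat ℓ x.val * u := by
  set v := padicValNat ℓ x.val
  have hval : ℓ ^ v * (x.val / ℓ ^ v) = x.val := Nat.mul_div_cancel' pow_padicValNat_dvd
  have hunit : IsUnit ((x.val / ℓ ^ v : ℕ) : ZMod (ℓ ^ n)) := by
    rw [isUnit_natCast_iff_not_dvd_pow Fact.out ((Nat.zero_le _).trans_lt (padicValNat_val_lt hx))]
    intro hdvd
    refine pow_succ_padicValNat_not_dvd (p := ℓ) ((val_ne_zero x).2 hx) ?_
    have := mul_dvd_mul_left (ℓ ^ v) hdvd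
    rwa [← pow_succ, hval] at this
  refine ⟨hunit.unit, ?_⟩
  rw [IsUnit.unit_spec, ← Nat.cast_pow, ← Nat.cast_mul, hval, natCast_zmod_val]

lemma card_ne_zero_padicValNat_val_eq {i : ℕ} (hi : i < n) :
    #{x : ZMod (ℓ ^ n) | x ≠ 0 ∧ padicValNat ℓ x.val = i} = (ℓ - 1) * ℓ ^ (n - 1 - i) := by
  have hset : #{x : ZMod (ℓ ^ n) | x ≠ 0 ∧ padicValNat ℓ x.val = i} =
      #{x : ZMod (ℓ ^ n) | ℓ ^ i ∣ x.val ∧ ¬ ℓ ^ (i + 1) ∣ x.val} := by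
    congr 1
    refine filter_congr fun x _ => ?_
    rw [Ne, ← val_eq_zero, padicValNat_dvd_iff, padicValNat_dvd_iff]
    omega
  rw [hset, filter_and_not,
    card_sdiff_of_subset (monotone_filter_right _ fun _ _ => (pow_dvd_pow ℓ i.le_succ).trans),
    card_pow_dvd_val hi.le, card_pow_dvd_val hi,
    show n - i = n - 1 - i + 1 by omega, show n - (i + 1) = n - 1 - i by omega, pow_succ',
    ← Nat.sub_one_mul]

lemma not_isUnit_iff_pow_succ_dvd_val {i : ℕ} (hi : i < n) {γ c : ZMod (ℓ ^ n)}
    (h : (ℓ : ZMod (ℓ ^ n)) ^ i * γ = c) : ¬IsUnit γ ↔ ℓ ^ (i + 1) ∣ c.val := by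
  have hc : c = ((ℓ ^ i * γ.val : ℕ) : ZMod (ℓ ^ n)) := by
    rw [← h]
    push_cast [natCast_zmod_val]
    rfl
  rw [isUnit_iff_not_dvd_val (by omega), not_not, hc, val_natCast,
    Nat.dvd_mod_iff (pow_dvd_pow ℓ hi), pow_succ,
    Nat.mul_dvd_mul_iff_left (pow_pos (Fact.out : ℓ.Prime).pos i)]

lemma card_pow_mul_eq_and_not_isUnit {i : ℕ} (hi : i < n) (c : ZMod (ℓ ^ n)) :
    #{γ : ZMod (ℓ ^ n) | (ℓ : ZMod (ℓ ^ n)) ^ i * γ = c ∧ ¬IsUnit γ} =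
      if ℓ ^ (i + 1) ∣ c.val then ℓ ^ i else 0 := by
  split_ifs with hc
  · set δ : ZMod (ℓ ^ n) := ((c.val / ℓ ^ i : ℕ) : ZMod (ℓ ^ n))
    have hδ : ((ℓ ^ i : ℕ) : ZMod (ℓ ^ n)) * δ = c := by
      rw [← Nat.cast_mul, Nat.mul_div_cancel' ((pow_dvd_pow ℓ i.le_succ).trans hc),
        natCast_zmod_val]
    have hq : ℓ ^ i * ℓ ^ (n - i) = ℓ ^ n := by rw [← pow_add, Nat.add_sub_cancel' hi.le]
    have hℓi : ℓ ^ i ≠ 0 := pow_ne_zero i (Fact.out : ℓ.Prime).ne_zero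
    calc #{γ : ZMod (ℓ ^ n) | (ℓ : ZMod (ℓ ^ n)) ^ i * γ = c ∧ ¬IsUnit γ}
        = #{γ : ZMod (ℓ ^ n) | castHom (Dvd.intro_left _ hq) (ZMod (ℓ ^ (n - i))) γ =
            castHom (Dvd.intro_left _ hq) (ZMod (ℓ ^ (n - i))) δ} := by
          congr 1
          refine filter_congr fun γ _ => ?_
          rw [and_iff_left_of_imp fun h => (not_isUnit_iff_pow_succ_dvd_val hi h).2 hc,
            ← natCast_mul_eq_natCast_mul_iff hℓi hq, hδ, Nat.cast_pow]
      _ = ℓ ^ i := by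
          rw [card_castHom_fiber, ← hq, Nat.mul_div_cancel _ (pow_pos (Fact.out : ℓ.Prime).pos _)]
  · rw [card_eq_zero, filter_eq_empty_iff]
    exact fun γ _ ⟨h, hγ⟩ => hc ((not_isUnit_iff_pow_succ_dvd_val hi h).1 hγ)

lemma card_mul_eq_and_not_isUnit {α : ZMod (ℓ ^ n)} (hα : α ≠ 0) (c : ZMod (ℓ ^ n)) :
    #{β | α * β = c ∧ ¬IsUnit β} =
      if ℓ ^ (padicValNat ℓ α.val + 1) ∣ c.val then ℓ ^ padicValNat ℓ α.val else 0 := by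
  obtain ⟨u, hu⟩ := exists_eq_pow_padicValNat_mul_unit hα
  rw [← card_pow_mul_eq_and_not_isUnit (padicValNat_val_lt hα)]
  refine card_equiv (Units.mulLeft u) fun β => ?_
  simp only [mem_filter, mem_univ, true_and, Units.mulLeft_apply, Units.isUnit_units_mul]
  conv_lhs => rw [hu, mul_assoc]

lemma sum_card_mul_eq_and_not_isUnit (c : ZMod (ℓ ^ n)) :
    ∑ α with α ≠ 0 ∧ ¬IsUnit α, #{β | α * β = c ∧ ¬IsUnit β} =
      #{i ∈ Icc 1 (n - 1) | ℓ ^ (i + 1) ∣ c.val} * ((ℓ - 1) * ℓ ^ (n - 1)) := by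
  have hv : ∀ α ∈ ({α | α ≠ 0 ∧ ¬IsUnit α} : Finset (ZMod (ℓ ^ n))),
      padicValNat ℓ α.val ∈ Icc 1 (n - 1) := by
    intro α hα
    obtain ⟨hα0, hαu⟩ := (mem_filter.1 hα).2
    have := padicValNat_val_lt hα0
    exact mem_Icc.2 ⟨(not_isUnit_iff_one_le_padicValNat hα0).1 hαu, by omega⟩
  rw [← sum_fiberwise_of_maps_to hv, card_filter, sum_mul]
  refine sum_congr rfl fun i hi => ?_
  obtain ⟨hi1, hin⟩ := mem_Icc.1 hi
  have hfiber : #{α ∈ ({α | α ≠ 0 ∧ ¬IsUnit α} : Finset (ZMod (ℓ ^ n))) |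
      padicValNat ℓ α.val = i} = #{α : ZMod (ℓ ^ n) | α ≠ 0 ∧ padicValNat ℓ α.val = i} := by
    rw [filter_filter]
    congr 1
    refine filter_congr fun α _ => ⟨fun ⟨⟨hα0, _⟩, hαi⟩ => ⟨hα0, hαi⟩, fun ⟨hα0, hαi⟩ =>
      ⟨⟨hα0, (not_isUnit_iff_one_le_padicValNat hα0).2 (hαi ▸ hi1)⟩, hαi⟩⟩
  rw [sum_congr rfl fun α hα => by
      rw [card_mul_eq_and_not_isUnit (mem_filter.1 (mem_filter.1 hα).1).2.1, (mem_filter.1 hα).2],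
    sum_const, smul_eq_mul, hfiber, card_ne_zero_padicValNat_val_eq (by omega)]
  split_ifs
  · rw [one_mul, mul_assoc, ← pow_add, show n - 1 - i + i = n - 1 by omega]
  · rw [mul_zero, zero_mul]

lemma card_pairs_mul_eq_and_not_isUnit (hn : n ≠ 0) (c : ZMod (ℓ ^ n)) :
    #{p : ZMod (ℓ ^ n) × ZMod (ℓ ^ n) | p.1 * p.2 = c ∧ ¬IsUnit p.1 ∧ ¬IsUnit p.2} =
      (if c = 0 then ℓ ^ (n - 1) else 0) +
        #{i ∈ Icc 1 (n - 1) | ℓ ^ (i + 1) ∣ c.val} * ((ℓ - 1) * ℓ ^ (n - 1)) := by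
  have h0 : (0 : ZMod (ℓ ^ n)) ∈ ({α | ¬IsUnit α} : Finset (ZMod (ℓ ^ n))) := by
    simp [isUnit_iff_not_dvd_val hn]
  have herase : ({α | ¬IsUnit α} : Finset (ZMod (ℓ ^ n))).erase 0 =
      ({α | α ≠ 0 ∧ ¬IsUnit α} : Finset (ZMod (ℓ ^ n))) := by
    ext α
    simp
  have hzero : #{β : ZMod (ℓ ^ n) | 0 * β = c ∧ ¬IsUnit β} = if c = 0 then ℓ ^ (n - 1) else 0 := by
    split_ifs with hc
    · simp [hc, card_nonunits hn]
    · simp [Ne.symm hc]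
  calc #{p : ZMod (ℓ ^ n) × ZMod (ℓ ^ n) | p.1 * p.2 = c ∧ ¬IsUnit p.1 ∧ ¬IsUnit p.2}
      = ∑ α with ¬IsUnit α, #{β | α * β = c ∧ ¬IsUnit β} := by
        rw [← card_filter_prod_eq_sum]
        congr 1
        exact filter_congr fun p _ => and_left_comm
    _ = _ := by rw [← add_sum_erase _ _ h0, herase, hzero, sum_card_mul_eq_and_not_isUnit]

lemma card_Icc_filter_pow_succ_dvd_val {c : ZMod (ℓ ^ n)} (hc : c ≠ 0) :
    #{i ∈ Icc 1 (n - 1) | ℓ ^ (i + 1) ∣ c.val} = padicValNat ℓ c.val - 1 := by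
  have hlt := padicValNat_val_lt hc
  have hfilter : {i ∈ Icc 1 (n - 1) | ℓ ^ (i + 1) ∣ c.val} = Icc 1 (padicValNat ℓ c.val - 1) := by
    ext i
    simp only [mem_filter, mem_Icc, padicValNat_dvd_iff_le ((val_ne_zero c).2 hc)]
    omega
  rw [hfilter, Nat.card_Icc, Nat.add_sub_cancel]

lemma card_pairs_mul_eq_and_castHom_eq_of_fst_ne_zero (hn : n ≠ 0) {a b : ZMod ℓ} {c : ZMod (ℓ ^ n)}
    (ha : a ≠ 0) (hc : castHom (dvd_pow_self ℓ hn) (ZMod ℓ) c = a * b) :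
    #{p : ZMod (ℓ ^ n) × ZMod (ℓ ^ n) | p.1 * p.2 = c ∧
      castHom (dvd_pow_self ℓ hn) (ZMod ℓ) p.1 = a ∧
      castHom (dvd_pow_self ℓ hn) (ZMod ℓ) p.2 = b} = ℓ ^ (n - 1) := by
  set π := castHom (dvd_pow_self ℓ hn) (ZMod ℓ)
  have hunique : ∀ α, π α = a → #{β | α * β = c ∧ π β = b} = 1 := by
    intro α hα
    obtain ⟨u, rfl⟩ := (isUnit_iff_castHom_ne_zero hn α).2 (hα ▸ ha)
    refine card_eq_one.2 ⟨↑u⁻¹ * c, ?_⟩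
    ext β
    simp only [mem_filter, mem_univ, true_and, mem_singleton, Units.eq_inv_mul_iff_mul_eq]
    refine and_iff_left_of_imp fun h => mul_left_cancel₀ ha ?_
    rw [← hα, ← map_mul, h, hc, hα]
  calc #{p : ZMod (ℓ ^ n) × ZMod (ℓ ^ n) | p.1 * p.2 = c ∧ π p.1 = a ∧ π p.2 = b}
      = ∑ α with π α = a, #{β | α * β = c ∧ π β = b} := by
        rw [← card_filter_prod_eq_sum]
        congr 1
        exact filter_congr fun p _ => and_left_comm
    _ = ∑ α with π α = a, 1 := sum_congr rfl fun α hα => hunique α (mem_filter.1 hα).2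
    _ = ℓ ^ (n - 1) := by
      rw [← card_eq_sum_ones, card_castHom_fiber,
        Nat.div_eq_of_eq_mul_left (Fact.out : ℓ.Prime).pos (pow_sub_one_mul hn ℓ).symm]

lemma card_pairs_mul_eq_and_castHom_eq (hn : n ≠ 0) {a b : ZMod ℓ} {c : ZMod (ℓ ^ n)}
    (hab : a ≠ 0 ∨ b ≠ 0) (hc : castHom (dvd_pow_self ℓ hn) (ZMod ℓ) c = a * b) :
    #{p : ZMod (ℓ ^ n) × ZMod (ℓ ^ n) | p.1 * p.2 = c ∧
      castHom (dvd_pow_self ℓ hn) (ZMod ℓ) p.1 = a ∧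
      castHom (dvd_pow_self ℓ hn) (ZMod ℓ) p.2 = b} = ℓ ^ (n - 1) := by
  rcases hab with ha | hb
  · exact card_pairs_mul_eq_and_castHom_eq_of_fst_ne_zero hn ha hc
  · rw [← card_pairs_mul_eq_and_castHom_eq_of_fst_ne_zero hn hb (hc.trans (mul_comm a b))]
    refine card_equiv (Equiv.prodComm _ _) fun p => ?_
    simp only [mem_filter, mem_univ, true_and, Equiv.prodComm_apply, Prod.fst_swap,
      Prod.snd_swap, mul_comm p.2, and_comm (b := _ = b)]

end PrimePower

end ZMod

lemma Nat.mul_sub_sub_add_two {n m : ℕ} (hn : 2 ≤ n) (hm : 2 ≤ m) :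
    n * m - n - m + 2 = 1 + (n - 1) * (m - 1) := by
  obtain ⟨n, rfl⟩ : ∃ k, n = k + 2 := ⟨n - 2, by omega⟩
  obtain ⟨m, rfl⟩ : ∃ k, m = k + 2 := ⟨m - 2, by omega⟩
  rw [show (n + 2) * (m + 2) = n * m + 2 * n + 2 * m + 4 by ring,
    show n + 2 - 1 = n + 1 by omega, show m + 2 - 1 = m + 1 by omega,
    show (n + 1) * (m + 1) = n * m + n + m + 1 by ring]
  omega

/-- Counting pairs `(α, β) ∈ (ℤ/ℓⁿℤ)²` with `αβ = c` and prescribed reductions mod `ℓ`. -/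
theorem count_product_pairs_zmod (ℓ : ℕ) (hℓ : ℓ.Prime) (n : ℕ) (hn : 2 ≤ n)
    (a b : ZMod ℓ) (c : ZMod (ℓ ^ n)) :
    letI π : ZMod (ℓ ^ n) →+* ZMod ℓ :=
      ZMod.castHom (dvd_pow_self ℓ (by omega : n ≠ 0)) (ZMod ℓ)
    letI N : ℕ := Nat.card {p : ZMod (ℓ ^ n) × ZMod (ℓ ^ n) //
      p.1 * p.2 = c ∧ π p.1 = a ∧ π p.2 = b}
    (π c ≠ a * b → N = 0) ∧
    (π c = a * b → (a ≠ 0 ∨ b ≠ 0) → N = ℓ ^ (n - 1)) ∧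
    (a = 0 → b = 0 → π c = 0 → c ≠ 0 →
      N = (ℓ - 1) * (padicValNat ℓ c.val - 1) * ℓ ^ (n - 1)) ∧
    (a = 0 → b = 0 → c = 0 → N = (n * ℓ - n - ℓ + 2) * ℓ ^ (n - 1)) := by
  have := Fact.mk hℓ
  have hn0 : n ≠ 0 := by omega
  set π := ZMod.castHom (dvd_pow_self ℓ hn0) (ZMod ℓ)
  set N := Nat.card {p : ZMod (ℓ ^ n) × ZMod (ℓ ^ n) // p.1 * p.2 = c ∧ π p.1 = a ∧ π p.2 = b}
  have hN : N = #{p : ZMod (ℓ ^ n) × ZMod (ℓ ^ n) | p.1 * p.2 = c ∧ π p.1 = a ∧ π p.2 = b} := by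
    simp only [N, Nat.card_eq_fintype_card, Fintype.card_subtype]
  have hN₀ : a = 0 → b = 0 → N = (if c = 0 then ℓ ^ (n - 1) else 0) +
      #{i ∈ Icc 1 (n - 1) | ℓ ^ (i + 1) ∣ c.val} * ((ℓ - 1) * ℓ ^ (n - 1)) := by
    rintro rfl rfl
    rw [hN, ← ZMod.card_pairs_mul_eq_and_not_isUnit hn0]
    congr 1
    refine filter_congr fun p _ => ?_
    simp only [π, ZMod.isUnit_iff_castHom_ne_zero hn0, not_not]
  refine ⟨fun h => ?_, fun h hab => ?_, fun ha hb _ hc => ?_, fun ha hb hc => ?_⟩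
  · rw [hN, card_eq_zero, filter_eq_empty_iff]
    rintro ⟨α, β⟩ _ ⟨rfl, rfl, rfl⟩
    exact h (map_mul π α β)
  · rw [hN, ZMod.card_pairs_mul_eq_and_castHom_eq hn0 hab h]
  · rw [hN₀ ha hb, if_neg hc, ZMod.card_Icc_filter_pow_succ_dvd_val hc]
    ring
  · subst hc
    rw [hN₀ ha hb, if_pos rfl, filter_true_of_mem fun i _ => by simp, Nat.card_Icc,
      Nat.add_sub_cancel, Nat.mul_sub_sub_add_two hn hℓ.two_le]
    ring
end

section
/- For a prime ℓ, the integral over ℤ_ℓ^× (with normalized Haar measure) of the function x ↦ ℓ^{-v_ℓ(x-1)} equals (ℓ² - ℓ - 1)/(ℓ² - 1). -/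
/-!
The level sets of `x ↦ ‖x - 1‖` on `ℤ_ℓ^×` are the differences `U_k \ U_{k+1}` of the congruence
subgroups `U_k = ker (ℤ_ℓ^× → (ℤ/ℓ^k)^×)`. By left invariance, `U_k` has measure
`1 / [ℤ_ℓ^× : U_k] = 1 / φ(ℓ^k)`, so the level set `‖x - 1‖ = ℓ^{-k}` has measure `(ℓ-2)/(ℓ-1)`
for `k = 0` and `ℓ^{-k}` for `k ≥ 1`, and the integral is
`(ℓ-2)/(ℓ-1) + Σ_{k≥1} ℓ^{-2k} = (ℓ² - ℓ - 1)/(ℓ² - 1)`.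
The point `x = 1` needs no separate treatment since the integrand vanishes there.
-/

open MeasureTheory

theorem MeasureTheory.integral_eq_tsum_measureReal_preimage_smul {X E : Type*}
    [MeasurableSpace X] [NormedAddCommGroup E] [NormedSpace ℝ E] [CompleteSpace E]
    [MeasurableSpace E] [MeasurableSingletonClass E] {μ : Measure X} {f : X → E} {a : ℕ → E}
    (ha : Function.Injective a) (hf : Measurable f) (hfi : Integrable f μ)
    (hrange : ∀ x, f x ≠ 0 → f x ∈ Set.range a) :
    ∫ x, f x ∂μ = ∑' k, μ.real (f ⁻¹' {a k}) • a k := by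
  have hS : ∀ k, MeasurableSet (f ⁻¹' {a k}) := fun k => hf (measurableSet_singleton _)
  have hdisj : Pairwise (Function.onFun Disjoint fun k => f ⁻¹' {a k}) :=
    fun j k hjk => (Set.disjoint_singleton.2 (ha.ne hjk)).preimage f
  calc ∫ x, f x ∂μ = ∫ x in ⋃ k, f ⁻¹' {a k}, f x ∂μ := by
        refine (setIntegral_eq_integral_of_forall_compl_eq_zero fun x hx => ?_).symm
        by_contra h
        obtain ⟨k, hk⟩ := hrange x h
        exact hx (Set.mem_iUnion.2 ⟨k, hk.symm⟩)
    _ = ∑' k, ∫ x in f ⁻¹' {a k}, f x ∂μ := integral_iUnion hS hdisj hfi.integrableOn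
    _ = ∑' k, μ.real (f ⁻¹' {a k}) • a k := by
        refine tsum_congr fun k => ?_
        rw [setIntegral_congr_fun (hS k) fun x hx => hx, setIntegral_const]

namespace PadicInt

variable {p : ℕ} [hp : Fact p.Prime]

theorem norm_eq_zpow_iff (x : ℤ_[p]) (n : ℤ) :
    ‖x‖ = (p : ℝ) ^ n ↔ ‖x‖ ≤ (p : ℝ) ^ n ∧ ¬‖x‖ ≤ (p : ℝ) ^ (n - 1) := by
  rw [norm_le_pow_iff_norm_lt_pow_add_one x (n - 1), sub_add_cancel, not_lt, ← le_antisymm_iff]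

theorem units_map_toZModPow_surjective (k : ℕ) :
    Function.Surjective (Units.map (toZModPow (p := p) k).toMonoidHom) := by
  rcases k.eq_zero_or_pos with rfl | hk
  · have : Subsingleton (ZMod (p ^ 0)) := by rw [pow_zero]; infer_instance
    exact fun _ => ⟨1, Subsingleton.elim _ _⟩
  · have : Fact (1 < p ^ k) := ⟨Nat.one_lt_pow hk.ne' hp.out.one_lt⟩
    have hsurj := ZMod.ringHom_surjective (toZModPow (p := p) k)
    exact IsLocalRing.surjective_units_map_of_local_ringHom _ hsurj (.of_surjective _ hsurj)

variable (p) in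
noncomputable def congruenceUnits (k : ℕ) : Subgroup ℤ_[p]ˣ :=
  (Units.map (toZModPow (p := p) k).toMonoidHom).ker

theorem mem_congruenceUnits_iff {k : ℕ} {u : ℤ_[p]ˣ} :
    u ∈ congruenceUnits p k ↔ ‖(u : ℤ_[p]) - 1‖ ≤ (p : ℝ) ^ (-(k : ℤ)) := by
  rw [norm_le_pow_iff_mem_span_pow, ← ker_toZModPow, RingHom.mem_ker, map_sub, map_one,
    sub_eq_zero, congruenceUnits, MonoidHom.mem_ker, Units.ext_iff]
  rfl

theorem index_congruenceUnits (k : ℕ) : (congruenceUnits p k).index = (p ^ k).totient := by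
  have : NeZero (p ^ k) := ⟨pow_ne_zero _ hp.out.ne_zero⟩
  rw [congruenceUnits, Subgroup.index_ker, MonoidHom.range_eq_top.2
    (units_map_toZModPow_surjective k), Subgroup.card_top, Nat.card_eq_fintype_card,
    ZMod.card_units_eq_totient]

theorem measurableSet_congruenceUnits [MeasurableSpace ℤ_[p]ˣ] [OpensMeasurableSpace ℤ_[p]ˣ]
    (k : ℕ) : MeasurableSet (congruenceUnits p k : Set ℤ_[p]ˣ) := by
  have hU : (congruenceUnits p k : Set ℤ_[p]ˣ) =
      (fun u : ℤ_[p]ˣ => ‖(u : ℤ_[p]) - 1‖) ⁻¹' Set.Iic ((p : ℝ) ^ (-(k : ℤ))) :=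
    Set.ext fun _ => mem_congruenceUnits_iff
  rw [hU]
  exact (by fun_prop : Continuous fun u : ℤ_[p]ˣ => ‖(u : ℤ_[p]) - 1‖).measurable measurableSet_Iic

section Measure

variable [MeasurableSpace ℤ_[p]ˣ] [BorelSpace ℤ_[p]ˣ]
  (μ : Measure ℤ_[p]ˣ) [μ.IsMulLeftInvariant] [IsProbabilityMeasure μ]

theorem measureReal_congruenceUnits (k : ℕ) :
    μ.real (congruenceUnits p k) = ((p ^ k).totient : ℝ)⁻¹ := by
  have hindex := index_congruenceUnits (p := p) k
  have : (congruenceUnits p k).FiniteIndex :=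
    ⟨hindex ▸ (Nat.totient_pos.2 (pow_pos hp.out.pos k)).ne'⟩
  have h := congrArg ENNReal.toReal
    ((congruenceUnits p k).index_mul_measure (measurableSet_congruenceUnits k) μ)
  rw [hindex, measure_univ, ENNReal.toReal_mul, ENNReal.toReal_natCast] at h
  exact eq_inv_of_mul_eq_one_right h

theorem measureReal_norm_sub_one_eq_zpow (k : ℕ) :
    μ.real {u : ℤ_[p]ˣ | ‖(u : ℤ_[p]) - 1‖ = (p : ℝ) ^ (-(k : ℤ))} =
      ((p ^ k).totient : ℝ)⁻¹ - ((p ^ (k + 1)).totient : ℝ)⁻¹ := by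
  have hS : {u : ℤ_[p]ˣ | ‖(u : ℤ_[p]) - 1‖ = (p : ℝ) ^ (-(k : ℤ))} =
      (congruenceUnits p k : Set ℤ_[p]ˣ) \ congruenceUnits p (k + 1) := by
    ext u
    simp only [Set.mem_ofPred_eq, Set.mem_sdiff, SetLike.mem_coe, mem_congruenceUnits_iff,
      norm_eq_zpow_iff, Nat.cast_succ, neg_add', sub_eq_add_neg]
  have hsub : (congruenceUnits p (k + 1) : Set ℤ_[p]ˣ) ⊆ congruenceUnits p k := fun u hu =>
    mem_congruenceUnits_iff.2 <| (mem_congruenceUnits_iff.1 hu).trans <|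
      zpow_le_zpow_right₀ (by exact_mod_cast hp.out.one_le) (by omega)
  rw [hS, measureReal_sdiff hsub (measurableSet_congruenceUnits _),
    measureReal_congruenceUnits, measureReal_congruenceUnits]

end Measure

end PadicInt

theorem Nat.Prime.hasSum_inv_totient_pow_sub_mul_zpow {p : ℕ} (hp : p.Prime) :
    HasSum (fun k : ℕ => (((p ^ k).totient : ℝ)⁻¹ - ((p ^ (k + 1)).totient : ℝ)⁻¹) *
      (p : ℝ) ^ (-(k : ℤ))) (((p : ℝ) ^ 2 - p - 1) / ((p : ℝ) ^ 2 - 1)) := by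
  have hp1 : (1 : ℝ) < p := by exact_mod_cast hp.one_lt
  have htotient (n : ℕ) : ((p ^ (n + 1)).totient : ℝ) = p ^ n * (p - 1) := by
    rw [Nat.totient_prime_pow_succ hp]
    push_cast [Nat.cast_sub hp.one_le]
    ring
  set r : ℝ := ((p : ℝ) ^ 2)⁻¹ with hr
  have hr1 : r < 1 := inv_lt_one_of_one_lt₀ (one_lt_pow₀ hp1 two_ne_zero)
  have hgeom : HasSum (fun n : ℕ => r * r ^ n) (r * (1 - r)⁻¹) :=
    (hasSum_geometric_of_lt_one (by positivity) hr1).mul_left r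
  have hp0 : (p : ℝ) - 1 ≠ 0 := by linarith
  have hsucc : HasSum (fun n : ℕ => (((p ^ (n + 1)).totient : ℝ)⁻¹ -
      ((p ^ (n + 1 + 1)).totient : ℝ)⁻¹) * (p : ℝ) ^ (-((n + 1 : ℕ) : ℤ))) (r * (1 - r)⁻¹) := by
    refine hgeom.congr_fun fun n => ?_
    have hdiff : ((p : ℝ) ^ n * (p - 1))⁻¹ - ((p : ℝ) ^ (n + 1) * (p - 1))⁻¹ =
        ((p : ℝ) ^ (n + 1))⁻¹ := by
      field_simp
      ring
    rw [htotient, htotient, hdiff, zpow_neg, zpow_natCast, hr, ← mul_inv, ← inv_pow, ← pow_mul]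
    ring
  convert hsucc.zero_add (f := fun k : ℕ => (((p ^ k).totient : ℝ)⁻¹ -
    ((p ^ (k + 1)).totient : ℝ)⁻¹) * (p : ℝ) ^ (-(k : ℤ))) using 1
  rw [htotient 0]
  simp only [pow_zero, Nat.totient_one, Nat.cast_one, inv_one, CharP.cast_eq_zero, neg_zero,
    zpow_zero, mul_one, one_mul, hr]
  have : (p : ℝ) ^ 2 - 1 ≠ 0 := by nlinarith
  field_simp
  ring

/-- For the normalized Haar measure on `ℤ_ℓ^×`, the integral of
`x ↦ ℓ^{-v_ℓ(x-1)}` (which is exactly the `ℓ`-adic norm `‖x - 1‖`, with the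
convention `ℓ^{-∞} = 0` at `x = 1`) equals `(ℓ² - ℓ - 1)/(ℓ² - 1)`. -/
theorem integral_padic_units_norm_sub_one (ℓ : ℕ) [Fact ℓ.Prime]
    [MeasurableSpace ℤ_[ℓ]ˣ] [BorelSpace ℤ_[ℓ]ˣ]
    (μ : Measure ℤ_[ℓ]ˣ) [μ.IsMulLeftInvariant] (hμ : μ Set.univ = 1) :
    ∫ x : ℤ_[ℓ]ˣ, ‖(x : ℤ_[ℓ]) - 1‖ ∂μ
      = ((ℓ : ℝ) ^ 2 - ℓ - 1) / ((ℓ : ℝ) ^ 2 - 1) := by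
  have hℓ : ℓ.Prime := Fact.out
  have : IsProbabilityMeasure μ := ⟨hμ⟩
  have hf : Continuous fun x : ℤ_[ℓ]ˣ => ‖(x : ℤ_[ℓ]) - 1‖ := by fun_prop
  have hinj : Function.Injective fun k : ℕ => (ℓ : ℝ) ^ (-(k : ℤ)) :=
    (zpow_right_injective₀ (by exact_mod_cast hℓ.pos) (by exact_mod_cast hℓ.ne_one)).comp
      (neg_injective.comp Nat.cast_injective)
  have hfi : Integrable (fun x : ℤ_[ℓ]ˣ => ‖(x : ℤ_[ℓ]) - 1‖) μ :=
    .of_bound hf.aestronglyMeasurable 1 (.of_forall fun x => by simpa using PadicInt.norm_le_one _)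
  rw [integral_eq_tsum_measureReal_preimage_smul hinj hf.measurable hfi
    fun x hx => ⟨_, (PadicInt.norm_eq_zpow_neg_valuation (norm_ne_zero_iff.1 hx)).symm⟩]
  refine (hℓ.hasSum_inv_totient_pow_sub_mul_zpow.congr_fun fun k => ?_).tsum_eq
  rw [smul_eq_mul, ← PadicInt.measureReal_norm_sub_one_eq_zpow μ k]
  rfl
end

section
/- For a prime ℓ, the normalized Haar measure of {(x,y) ∈ ℤ_ℓ^× × ℤ_ℓ^× : v_ℓ(x-1) + v_ℓ(y-1) = n} equals (ℓ-2)²/(ℓ-1)² for n = 0, and (1/ℓⁿ)·(2(ℓ-2)/(ℓ-1) + n - 1) for n ≥ 1. -/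
/-!
The principal units `1 + ℓ^k ℤ_ℓ` form the kernel of `ℤ_ℓ^× → (ℤ/ℓ^k)^×`, which is onto, so they
have index `φ(ℓ^k)` and a normalized invariant measure gives them mass `1/φ(ℓ^k)`. Subtracting
consecutive levels, the shell `v(u - 1) = k` has mass `(ℓ-2)/(ℓ-1)` for `k = 0` and `ℓ^(-k)` for
`k ≥ 1`. The set in question is the disjoint union of the products of shells `i` and `j` over
`i + j = n`; for `n ≥ 1` the two boundary terms give `2 ℓ^(-n) (ℓ-2)/(ℓ-1)` and each of the `n - 1`
interior ones gives `ℓ^(-n)`.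
-/

open MeasureTheory
open scoped ENNReal
open Finset.HasAntidiagonal (antidiagonal mem_antidiagonal)

theorem Finset.Nat.sum_antidiagonal_mul_of_eq_pow {R : Type*} [CommSemiring R] {s : ℕ → R}
    {r : R} (hs : ∀ k ≠ 0, s k = r ^ k) (m : ℕ) :
    ∑ ij ∈ antidiagonal (m + 1), s ij.1 * s ij.2 = r ^ (m + 1) * (2 * s 0 + m) := by
  have hmid : ∀ k ∈ Finset.range m, s (k + 1) * s (m + 1 - (k + 1)) = r ^ (m + 1) := by
    intro k hk
    rw [hs _ k.add_one_ne_zero, hs _ (by grind), ← pow_add]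
    congr 1
    grind
  rw [Nat.sum_antidiagonal_eq_sum_range_succ (fun i j => s i * s j), sum_range_succ',
    sum_range_succ, sum_congr rfl hmid, sum_const, card_range, nsmul_eq_mul, Nat.sub_self,
    Nat.sub_zero, hs _ m.add_one_ne_zero]
  ring

theorem Subgroup.measure_eq_inv_index {G : Type*} [Group G] [MeasurableSpace G] [MeasurableMul G]
    (μ : Measure G) [IsProbabilityMeasure μ] [μ.IsMulLeftInvariant] (H : Subgroup G)
    [H.FiniteIndex] (hH : MeasurableSet (H : Set G)) :
    μ H = (H.index : ℝ≥0∞)⁻¹ :=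
  ENNReal.eq_inv_of_mul_eq_one_left (by rw [mul_comm, H.index_mul_measure hH μ, measure_univ])

namespace PadicInt

variable (p : ℕ) [Fact p.Prime]

theorem unitsMap_toZModPow_surjective (k : ℕ) :
    Function.Surjective (Units.map (toZModPow k : ℤ_[p] →+* ZMod (p ^ k)).toMonoidHom) := by
  rcases eq_or_ne k 0 with rfl | hk
  · have : Subsingleton (ZMod (p ^ 0)) := by rw [pow_zero]; infer_instance
    exact fun v => ⟨1, Subsingleton.elim _ _⟩
  have : Nontrivial (ZMod (p ^ k)) :=
    ZMod.nontrivial_iff.mpr (by simp [(Fact.out : p.Prime).ne_one, hk])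
  exact IsLocalRing.surjective_units_map_of_local_ringHom _ (ZMod.ringHom_surjective _)
    (.of_surjective _ (ZMod.ringHom_surjective _))

/-- The principal units `1 + p ^ k ℤ_[p]`; for `k = 0` this is the whole unit group. -/
noncomputable def principalUnits (k : ℕ) : Subgroup ℤ_[p]ˣ :=
  (Units.map (toZModPow k : ℤ_[p] →+* ZMod (p ^ k)).toMonoidHom).ker

variable {p} in
theorem mem_principalUnits {k : ℕ} {u : ℤ_[p]ˣ} :
    u ∈ principalUnits p k ↔ ‖(u : ℤ_[p]) - 1‖ ≤ (p : ℝ) ^ (-(k : ℤ)) := by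
  rw [principalUnits, MonoidHom.mem_ker, Units.ext_iff, norm_le_pow_iff_mem_span_pow,
    ← ker_toZModPow, RingHom.mem_ker, map_sub, map_one, sub_eq_zero]
  rfl

theorem index_principalUnits (k : ℕ) : (principalUnits p k).index = (p ^ k).totient := by
  have : NeZero (p ^ k) := ⟨pow_ne_zero _ (Fact.out : p.Prime).ne_zero⟩
  rw [principalUnits, Subgroup.index_ker, MonoidHom.range_eq_top_of_surjective _
    (unitsMap_toZModPow_surjective p k), Subgroup.card_top, Nat.card_eq_fintype_card,
    ZMod.card_units_eq_totient]

theorem coe_principalUnits (k : ℕ) :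
    (principalUnits p k : Set ℤ_[p]ˣ) = {u : ℤ_[p]ˣ | ‖(u : ℤ_[p]) - 1‖ ≤ (p : ℝ) ^ (-(k : ℤ))} :=
  Set.ext fun _ => mem_principalUnits

theorem principalUnits_succ_le (k : ℕ) : principalUnits p (k + 1) ≤ principalUnits p k := by
  intro u hu
  rw [mem_principalUnits] at hu ⊢
  exact hu.trans (zpow_le_zpow_right₀ (mod_cast (Fact.out : p.Prime).one_le) (by omega))

/-- The units `u` with `v_p(u - 1) = k`. -/
def unitsShell (k : ℕ) : Set ℤ_[p]ˣ := {u | ‖(u : ℤ_[p]) - 1‖ = (p : ℝ) ^ (-(k : ℤ))}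

theorem unitsShell_eq_diff (k : ℕ) :
    unitsShell p k = (principalUnits p k : Set ℤ_[p]ˣ) \ principalUnits p (k + 1) := by
  ext u
  simp only [unitsShell, Set.mem_sdiff, SetLike.mem_coe, mem_principalUnits, Set.mem_ofPred_eq,
    norm_le_pow_iff_norm_lt_pow_add_one (n := -((k + 1 : ℕ) : ℤ)), not_lt]
  push_cast
  rw [neg_add, neg_add_cancel_right, le_antisymm_iff]

theorem norm_mul_norm_eq_zpow_neg_iff {x y : ℤ_[p]} {n : ℕ} :
    ‖x‖ * ‖y‖ = (p : ℝ) ^ (-(n : ℤ)) ↔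
      ∃ ij ∈ antidiagonal n, ‖x‖ = (p : ℝ) ^ (-(ij.1 : ℤ)) ∧ ‖y‖ = (p : ℝ) ^ (-(ij.2 : ℤ)) := by
  have hp : (p : ℝ) ≠ 0 := by exact_mod_cast (Fact.out : p.Prime).ne_zero
  constructor
  · intro h
    have hx : x ≠ 0 := by
      rintro rfl; rw [norm_zero, zero_mul] at h; exact zpow_ne_zero _ hp h.symm
    have hy : y ≠ 0 := by
      rintro rfl; rw [norm_zero, mul_zero] at h; exact zpow_ne_zero _ hp h.symm
    refine ⟨(x.valuation, y.valuation), ?_, norm_eq_zpow_neg_valuation hx,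
      norm_eq_zpow_neg_valuation hy⟩
    rw [norm_eq_zpow_neg_valuation hx, norm_eq_zpow_neg_valuation hy, ← zpow_add₀ hp] at h
    have := zpow_right_injective₀ (G₀ := ℝ) (by positivity)
      (by exact_mod_cast (Fact.out : p.Prime).ne_one) h
    rw [mem_antidiagonal]
    omega
  · rintro ⟨⟨i, j⟩, hij, hx, hy⟩
    rw [hx, hy, ← zpow_add₀ hp, ← mem_antidiagonal.mp hij]
    push_cast
    ring_nf

theorem disjoint_unitsShell {i j : ℕ} (h : i ≠ j) :
    Disjoint (unitsShell p i) (unitsShell p j) := by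
  refine Set.disjoint_left.mpr fun u hi hj => h ?_
  have := zpow_right_injective₀ (G₀ := ℝ) (by exact_mod_cast (Fact.out : p.Prime).pos)
    (by exact_mod_cast (Fact.out : p.Prime).ne_one) (hi.symm.trans hj)
  omega

theorem pairwiseDisjoint_unitsShell_prod (n : ℕ) :
    (antidiagonal n : Set (ℕ × ℕ)).PairwiseDisjoint
      fun ij => unitsShell p ij.1 ×ˢ unitsShell p ij.2 := by
  intro ij hij ij' hij' hne
  refine Set.disjoint_prod.mpr (.inl (disjoint_unitsShell p fun h => hne (Prod.ext h ?_)))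
  rw [Finset.mem_coe, mem_antidiagonal] at hij hij'
  omega

theorem setOf_norm_mul_norm_eq_biUnion (n : ℕ) :
    {q : ℤ_[p]ˣ × ℤ_[p]ˣ | ‖(q.1 : ℤ_[p]) - 1‖ * ‖(q.2 : ℤ_[p]) - 1‖ = (p : ℝ) ^ (-(n : ℤ))}
      = ⋃ ij ∈ antidiagonal n, unitsShell p ij.1 ×ˢ unitsShell p ij.2 := by
  ext q
  simp only [Set.mem_ofPred_eq, norm_mul_norm_eq_zpow_neg_iff, Set.mem_iUnion, Set.mem_prod,
    exists_prop]
  rfl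

theorem continuous_norm_units_sub_one : Continuous fun u : ℤ_[p]ˣ => ‖(u : ℤ_[p]) - 1‖ :=
  (Units.continuous_val.sub continuous_const).norm

section Measure

variable [MeasurableSpace ℤ_[p]ˣ] [BorelSpace ℤ_[p]ˣ]

theorem measurableSet_principalUnits (k : ℕ) : MeasurableSet (principalUnits p k : Set ℤ_[p]ˣ) := by
  rw [coe_principalUnits]
  exact (continuous_norm_units_sub_one p).measurable measurableSet_Iic

theorem measurableSet_unitsShell (k : ℕ) : MeasurableSet (unitsShell p k) :=
  (continuous_norm_units_sub_one p).measurable (measurableSet_singleton _)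

theorem measure_prod_setOf_norm_mul_norm_eq (μ ν : Measure ℤ_[p]ˣ) [SFinite ν] (n : ℕ) :
    μ.prod ν {q : ℤ_[p]ˣ × ℤ_[p]ˣ |
        ‖(q.1 : ℤ_[p]) - 1‖ * ‖(q.2 : ℤ_[p]) - 1‖ = (p : ℝ) ^ (-(n : ℤ))}
      = ∑ ij ∈ antidiagonal n, μ (unitsShell p ij.1) * ν (unitsShell p ij.2) := by
  rw [setOf_norm_mul_norm_eq_biUnion, measure_biUnion_finset (pairwiseDisjoint_unitsShell_prod p n)
    fun ij _ => (measurableSet_unitsShell p _).prod (measurableSet_unitsShell p _)]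
  exact Finset.sum_congr rfl fun ij _ => Measure.prod_prod _ _

variable (μ : Measure ℤ_[p]ˣ) [IsProbabilityMeasure μ] [μ.IsMulLeftInvariant]

theorem measure_principalUnits (k : ℕ) :
    μ (principalUnits p k) = ((p ^ k).totient : ℝ≥0∞)⁻¹ := by
  have : (principalUnits p k).FiniteIndex :=
    ⟨by simp [index_principalUnits, (Fact.out : p.Prime).ne_zero]⟩
  rw [Subgroup.measure_eq_inv_index μ _ (measurableSet_principalUnits p k),
    index_principalUnits]

theorem measure_unitsShell_add (k : ℕ) :
    μ (unitsShell p k) + ((p ^ (k + 1)).totient : ℝ≥0∞)⁻¹ = ((p ^ k).totient : ℝ≥0∞)⁻¹ := by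
  rw [unitsShell_eq_diff, ← measure_principalUnits p μ, ← measure_principalUnits p μ,
    ← measure_sdiff_add_inter (principalUnits p k : Set ℤ_[p]ˣ)
      (measurableSet_principalUnits p (k + 1)),
    Set.inter_eq_right.mpr (principalUnits_succ_le p k)]

theorem measure_unitsShell_zero :
    μ (unitsShell p 0) = ((p : ℝ≥0∞) - 2) / ((p : ℝ≥0∞) - 1) := by
  have hp : p.Prime := Fact.out
  have h := measure_unitsShell_add p μ 0
  rw [zero_add, pow_one, Nat.totient_prime hp, pow_zero, Nat.totient_one, Nat.cast_one,
    inv_one] at h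
  obtain ⟨q, rfl⟩ : ∃ q, p = q + 2 := ⟨p - 2, by have := hp.two_le; omega⟩
  have key : (((q + 2 : ℕ) : ℝ≥0∞) - 2) / (((q + 2 : ℕ) : ℝ≥0∞) - 1)
      + ((q + 2 - 1 : ℕ) : ℝ≥0∞)⁻¹ = 1 := by
    have h2 : ((q + 2 : ℕ) : ℝ≥0∞) - 2 = q := by
      push_cast; exact ENNReal.add_sub_cancel_right ENNReal.ofNat_ne_top
    have h1 : ((q + 2 : ℕ) : ℝ≥0∞) - 1 = ((q + 1 : ℕ) : ℝ≥0∞) := by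
      rw [← Nat.cast_one, ← ENNReal.natCast_sub]; rfl
    rw [h2, h1, show q + 2 - 1 = q + 1 by omega, ← one_div, ENNReal.div_add_div_same,
      Nat.cast_succ, ENNReal.div_self] <;> simp
  have hc : ((q + 2 - 1 : ℕ) : ℝ≥0∞)⁻¹ ≠ ⊤ := by simp
  rw [ENNReal.eq_sub_of_add_eq hc h, ENNReal.eq_sub_of_add_eq hc key]

theorem measure_unitsShell_of_ne_zero {k : ℕ} (hk : k ≠ 0) :
    μ (unitsShell p k) = ((p : ℝ≥0∞) ^ k)⁻¹ := by
  have hp : p.Prime := Fact.out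
  obtain ⟨j, rfl⟩ := Nat.exists_eq_add_one_of_ne_zero hk
  obtain ⟨d, rfl⟩ : ∃ d, p = d + 1 := ⟨p - 1, by have := hp.one_le; omega⟩
  have hd : d ≠ 0 := by rintro rfl; exact Nat.not_prime_one hp
  have key : (((d + 1 : ℕ) : ℝ≥0∞) ^ (j + 1))⁻¹ + (((d + 1) ^ (j + 1 + 1)).totient : ℝ≥0∞)⁻¹
      = (((d + 1) ^ (j + 1)).totient : ℝ≥0∞)⁻¹ := by
    rw [Nat.totient_prime_pow_succ hp, Nat.totient_prime_pow_succ hp, Nat.add_sub_cancel,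
      ← ENNReal.toReal_eq_toReal_iff' (by simp [ENNReal.add_eq_top, hd]) (by simp [hd]),
      ENNReal.toReal_add (by simp) (by simp [hd])]
    simp only [ENNReal.toReal_inv, ENNReal.toReal_pow, ENNReal.toReal_natCast]
    push_cast
    have : (d : ℝ) ≠ 0 := by exact_mod_cast hd
    field_simp
    ring
  have hc : (((d + 1) ^ (j + 1 + 1)).totient : ℝ≥0∞)⁻¹ ≠ ⊤ := by simp
  rw [ENNReal.eq_sub_of_add_eq hc (measure_unitsShell_add _ μ _), ENNReal.eq_sub_of_add_eq hc key]

end Measure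

end PadicInt

theorem haar_prod_padic_units_valuation_sum_general (ℓ : ℕ) [Fact ℓ.Prime]
    [MeasurableSpace ℤ_[ℓ]ˣ] [BorelSpace ℤ_[ℓ]ˣ]
    (μ : Measure ℤ_[ℓ]ˣ) [μ.IsMulLeftInvariant]
    (hμ : μ Set.univ = 1) (n : ℕ) :
    (μ.prod μ) {p : ℤ_[ℓ]ˣ × ℤ_[ℓ]ˣ |
        ‖(p.1 : ℤ_[ℓ]) - 1‖ * ‖(p.2 : ℤ_[ℓ]) - 1‖ = (ℓ : ℝ) ^ (-(n : ℤ))}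
      = if n = 0 then (((ℓ : ℝ≥0∞) - 2) / ((ℓ : ℝ≥0∞) - 1)) ^ 2
        else ((ℓ : ℝ≥0∞) ^ n)⁻¹ *
          (2 * ((ℓ : ℝ≥0∞) - 2) / ((ℓ : ℝ≥0∞) - 1) + (n : ℝ≥0∞) - 1) := by
  have : IsProbabilityMeasure μ := ⟨hμ⟩
  rw [PadicInt.measure_prod_setOf_norm_mul_norm_eq]
  rcases n with _ | m
  · simp [PadicInt.measure_unitsShell_zero, sq]
  · have hshell (k : ℕ) (hk : k ≠ 0) : μ (PadicInt.unitsShell ℓ k) = (ℓ : ℝ≥0∞)⁻¹ ^ k := by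
      rw [PadicInt.measure_unitsShell_of_ne_zero ℓ μ hk, ENNReal.inv_pow]
    rw [Finset.Nat.sum_antidiagonal_mul_of_eq_pow hshell, PadicInt.measure_unitsShell_zero,
      if_neg m.add_one_ne_zero, ENNReal.inv_pow, mul_div_assoc, Nat.cast_succ, ← add_assoc,
      ENNReal.add_sub_cancel_right ENNReal.one_ne_top]

/-- For the product of normalized Haar measures on `ℤ_ℓ^× × ℤ_ℓ^×`, the measure of
`{(x,y) : v_ℓ(x-1) + v_ℓ(y-1) = n}` (expressed via the `ℓ`-adic norm, the
condition being `‖x-1‖·‖y-1‖ = ℓ⁻ⁿ`) equals `((ℓ-2)/(ℓ-1))²` for `n = 0`, and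
`ℓ⁻ⁿ (2(ℓ-2)/(ℓ-1) + n - 1)` for `n ≥ 1`. -/
theorem haar_prod_padic_units_valuation_sum (ℓ : ℕ) [Fact ℓ.Prime]
    [MeasurableSpace ℤ_[ℓ]ˣ] [BorelSpace ℤ_[ℓ]ˣ]
    (μ : Measure ℤ_[ℓ]ˣ) [μ.IsMulLeftInvariant] [SigmaFinite μ]
    (hμ : μ Set.univ = 1) (n : ℕ) :
    (μ.prod μ) {p : ℤ_[ℓ]ˣ × ℤ_[ℓ]ˣ |
        ‖(p.1 : ℤ_[ℓ]) - 1‖ * ‖(p.2 : ℤ_[ℓ]) - 1‖ = (ℓ : ℝ) ^ (-(n : ℤ))}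
      = if n = 0 then (((ℓ : ℝ≥0∞) - 2) / ((ℓ : ℝ≥0∞) - 1)) ^ 2
        else ((ℓ : ℝ≥0∞) ^ n)⁻¹ *
          (2 * ((ℓ : ℝ≥0∞) - 2) / ((ℓ : ℝ≥0∞) - 1) + (n : ℝ≥0∞) - 1) :=
  haar_prod_padic_units_valuation_sum_general ℓ μ hμ n
end
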